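/- arXiv:2211.11232 — 2 statements merged into one kernel-verified Lean document; each statement's English description precedes it below -/
import Mathlib

section
/- Let S ⊆ {-1,0,1}² be a step set with nonnegative weights p_{u,v} summing to 1 and with p_{0,0} < 1. If h : ℤ² → ℝ satisfies Dirichlet boundary conditions, is discrete harmonic (i.e. (Δh)(i,j) = 0 for all i,j ≥ 0), and moreover vanishes on both boundary axes, i.e. h(i,0) = 0 for all i ≥ 0 and h(0,j) = 0 for all j ≥ 0, then h is identically zero. -/
/-
Induct on the anti-diagonals `i + j = N`. Once `h` vanishes below diagonal `N`, the harmonic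
equation at a point of diagonal `N - 2` reaches diagonal `N` only through the step `(1, 1)`; if
`p 1 1 = 0`, the equation on diagonal `N - 1` reaches it only through `(1, 0)` and `(0, 1)`; if
those weights vanish too, the equation on diagonal `N` involves only `(0, 0)`, `(-1, 1)` and
`(1, -1)`. So `x k = h k (N - k)`, which vanishes at `k = 0` and `k = N` by the axis conditions,
satisfies either `p 1 1 * x k = 0`, or a first-order recurrence propagating `0` from one end, or
`(1 - p 0 0) x (k + 1) = α x k + β x (k + 2)` with `α + β ≤ 1 - p 0 0`. In the last case `|x k|`
is nondecreasing when `β > 0`, hence bounded by `|x N| = 0`.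
-/

open Finset

/-- The discrete Laplacian associated with weights `p` on the step set `{-1,0,1}²`:
`(Δh)(i,j) = Σ_{(u,v)} p u v · h(i+u, j+v) − h(i,j)` for `i,j ≥ 0`, and `0` otherwise. -/
noncomputable def dLap (p : ℤ → ℤ → ℝ) (h : ℤ → ℤ → ℝ) : ℤ → ℤ → ℝ :=
  fun i j =>
    if 0 ≤ i ∧ 0 ≤ j then
      (∑ u ∈ ({-1, 0, 1} : Finset ℤ), ∑ v ∈ ({-1, 0, 1} : Finset ℤ),
        p u v * h (i + u) (j + v)) - h i j
    else 0

section Recurrence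

variable {x : ℕ → ℝ} {N : ℕ}

theorem eq_zero_of_mul_succ_add_mul_eq_zero {a b : ℝ} (hab : a ≠ 0 ∨ b ≠ 0)
    (h0 : x 0 = 0) (hN : x N = 0) (hrec : ∀ k < N, a * x (k + 1) + b * x k = 0) :
    ∀ k ≤ N, x k = 0 := by
  intro k hk
  rcases hab with ha | hb
  · induction k with
    | zero => exact h0
    | succ k ih =>
      have hk' := hrec k hk
      rw [ih (by omega), mul_zero, add_zero] at hk'
      exact (mul_eq_zero.1 hk').resolve_left ha
  · induction hk using Nat.decreasingInduction with
    | self => exact hN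
    | of_succ k hk ih =>
      have hk' := hrec k hk
      rw [ih, mul_zero, zero_add] at hk'
      exact (mul_eq_zero.1 hk').resolve_left hb

theorem abs_le_abs_succ_of_mul_succ_eq {α β q : ℝ} (hα : 0 ≤ α) (hβ : 0 < β) (hαβ : α + β ≤ q)
    (h0 : x 0 = 0) (hrec : ∀ k, k + 1 < N → q * x (k + 1) = α * x k + β * x (k + 2)) :
    ∀ k < N, |x k| ≤ |x (k + 1)| := by
  intro k hk
  induction k with
  | zero => simp [h0]
  | succ k ih =>
    have hprev := ih (by omega)
    have : β * |x (k + 1)| ≤ β * |x (k + 2)| := calc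
      β * |x (k + 1)| ≤ q * |x (k + 1)| - α * |x k| := by
        nlinarith [mul_le_mul_of_nonneg_left hprev hα, abs_nonneg (x (k + 1))]
      _ = |q * x (k + 1)| - |α * x k| := by
        rw [abs_mul, abs_mul, abs_of_nonneg hα, abs_of_nonneg (by linarith : 0 ≤ q)]
      _ ≤ |q * x (k + 1) - α * x k| := abs_sub_abs_le_abs_sub _ _
      _ = β * |x (k + 2)| := by rw [hrec k hk, add_sub_cancel_left, abs_mul, abs_of_pos hβ]
    exact le_of_mul_le_mul_left this hβ

theorem eq_zero_of_mul_succ_eq_mul_add_mul {α β q : ℝ} (hα : 0 ≤ α) (hβ : 0 ≤ β) (hq : 0 < q)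
    (hαβ : α + β ≤ q) (h0 : x 0 = 0) (hN : x N = 0)
    (hrec : ∀ k, k + 1 < N → q * x (k + 1) = α * x k + β * x (k + 2)) :
    ∀ k ≤ N, x k = 0 := by
  intro k hk
  rcases hβ.eq_or_lt with rfl | hβ
  · induction k with
    | zero => exact h0
    | succ k ih =>
      rcases (show k + 1 < N ∨ k + 1 = N by omega) with hk | rfl
      · have hk' := hrec k hk
        rw [ih (by omega), mul_zero, zero_mul, add_zero] at hk'
        exact (mul_eq_zero.1 hk').resolve_left hq.ne'
      · exact hN
  · have hmono := abs_le_abs_succ_of_mul_succ_eq hα hβ hαβ h0 hrec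
    suffices |x k| ≤ |x N| by rwa [hN, abs_zero, abs_nonpos_iff] at this
    induction hk using Nat.decreasingInduction with
    | self => rfl
    | of_succ k hk ih => exact (hmono k hk).trans ih

end Recurrence

section Plane

variable {p h : ℤ → ℤ → ℝ}

theorem sum_neg_one_zero_one (f : ℤ → ℝ) :
    ∑ u ∈ ({-1, 0, 1} : Finset ℤ), f u = f (-1) + f 0 + f 1 := by
  simp [add_assoc]

def IsHarmonic (p h : ℤ → ℤ → ℝ) : Prop :=
  ∀ i j : ℤ, 0 ≤ i → 0 ≤ j → dLap p h i j = 0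

def VanishesBelow (h : ℤ → ℤ → ℝ) (N : ℤ) : Prop :=
  ∀ i j : ℤ, i + j < N → h i j = 0

theorem IsHarmonic.weighted_sum_eq {i j : ℤ} (hharm : IsHarmonic p h) (hi : 0 ≤ i) (hj : 0 ≤ j) :
    p (-1) (-1) * h (i - 1) (j - 1) + p (-1) 0 * h (i - 1) j + p (-1) 1 * h (i - 1) (j + 1)
      + (p 0 (-1) * h i (j - 1) + p 0 0 * h i j + p 0 1 * h i (j + 1))
      + (p 1 (-1) * h (i + 1) (j - 1) + p 1 0 * h (i + 1) j + p 1 1 * h (i + 1) (j + 1))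
      = h i j := by
  have H := hharm i j hi hj
  simp only [dLap, if_pos (And.intro hi hj), sub_eq_zero, sum_neg_one_zero_one] at H
  simpa [← sub_eq_add_neg] using H

theorem IsHarmonic.mul_eq_zero_of_vanishesBelow {i j : ℤ} (hharm : IsHarmonic p h)
    (hvan : VanishesBelow h (i + j)) (hi : 1 ≤ i) (hj : 1 ≤ j) : p 1 1 * h i j = 0 := by
  have H := hharm.weighted_sum_eq (i := i - 1) (j := j - 1) (by omega) (by omega)
  simp only [sub_add_cancel] at H
  unfold VanishesBelow at hvan
  simpa (disch := omega) only [hvan, mul_zero, zero_add] using H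

theorem IsHarmonic.mul_add_mul_eq_zero_of_vanishesBelow {i j : ℤ} (hharm : IsHarmonic p h)
    (hp11 : p 1 1 = 0) (hvan : VanishesBelow h (i + j + 1)) (hi : 0 ≤ i) (hj : 0 ≤ j) :
    p 1 0 * h (i + 1) j + p 0 1 * h i (j + 1) = 0 := by
  have H := hharm.weighted_sum_eq hi hj
  unfold VanishesBelow at hvan
  simp (disch := omega) only [hvan, hp11, mul_zero, zero_mul, zero_add, add_zero] at H
  linarith

theorem IsHarmonic.mul_eq_add_of_vanishesBelow {i j : ℤ} (hharm : IsHarmonic p h)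
    (hp11 : p 1 1 = 0) (hp10 : p 1 0 = 0) (hp01 : p 0 1 = 0)
    (hvan : VanishesBelow h (i + j)) (hi : 0 ≤ i) (hj : 0 ≤ j) :
    (1 - p 0 0) * h i j = p (-1) 1 * h (i - 1) (j + 1) + p 1 (-1) * h (i + 1) (j - 1) := by
  have H := hharm.weighted_sum_eq hi hj
  unfold VanishesBelow at hvan
  simp (disch := omega) only [hvan, hp11, hp10, hp01, mul_zero, zero_mul, zero_add,
    add_zero] at H
  linarith

theorem diagonal_eq_zero (hp0 : ∀ u v : ℤ, 0 ≤ p u v)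
    (hp1 : ∑ u ∈ ({-1, 0, 1} : Finset ℤ), ∑ v ∈ ({-1, 0, 1} : Finset ℤ), p u v = 1)
    (hp00 : p 0 0 < 1) (hharm : IsHarmonic p h)
    (hax1 : ∀ i : ℤ, 0 ≤ i → h i 0 = 0) (hax2 : ∀ j : ℤ, 0 ≤ j → h 0 j = 0)
    {N : ℕ} (hvan : VanishesBelow h N) : ∀ k ≤ N, h k (N - k) = 0 := by
  set x : ℕ → ℝ := fun k ↦ h k (N - k) with hx
  have hx0 : x 0 = 0 := by simpa [hx] using hax2 N (by positivity)
  have hxN : x N = 0 := by simpa [hx] using hax1 N (by positivity)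
  show ∀ k ≤ N, x k = 0
  by_cases hp11 : p 1 1 = 0
  · by_cases hrow : p 1 0 ≠ 0 ∨ p 0 1 ≠ 0
    · refine eq_zero_of_mul_succ_add_mul_eq_zero hrow hx0 hxN fun k hk ↦ ?_
      have := hharm.mul_add_mul_eq_zero_of_vanishesBelow hp11 (i := k) (j := N - 1 - k)
        (by convert hvan using 1; ring) (by positivity) (by omega)
      convert this using 3 <;> simp only [hx] <;> push_cast <;> ring_nf
    · push Not at hrow
      obtain ⟨hp10, hp01⟩ := hrow
      have hweights : p (-1) 1 + p 1 (-1) ≤ 1 - p 0 0 := by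
        simp only [sum_neg_one_zero_one] at hp1
        linarith [hp0 (-1) (-1), hp0 (-1) 0, hp0 0 (-1)]
      refine eq_zero_of_mul_succ_eq_mul_add_mul (hp0 (-1) 1) (hp0 1 (-1)) (by linarith)
        hweights hx0 hxN fun k hk ↦ ?_
      have := hharm.mul_eq_add_of_vanishesBelow hp11 hp10 hp01 (i := k + 1)
        (j := N - (k + 1)) (by convert hvan using 1; ring) (by positivity) (by omega)
      convert this using 2 <;> simp only [hx] <;> push_cast <;> ring_nf
  · intro k hk
    rcases (show k = 0 ∨ k = N ∨ (1 ≤ k ∧ k + 1 ≤ N) by omega) with rfl | rfl | hk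
    · exact hx0
    · exact hxN
    · exact (mul_eq_zero.1 (hharm.mul_eq_zero_of_vanishesBelow
        (by convert hvan using 1; ring) (by omega) (by omega))).resolve_left hp11

theorem VanishesBelow.succ {N : ℕ} (hD : ∀ i j : ℤ, i < 0 ∨ j < 0 → h i j = 0)
    (hvan : VanishesBelow h N) (hdiag : ∀ k ≤ N, h k (N - k) = 0) :
    VanishesBelow h (N + 1) := by
  intro i j hij
  by_cases hneg : i < 0 ∨ j < 0
  · exact hD i j hneg
  rcases (show i + j < N ∨ i + j = N by omega) with hlt | hdiagonal
  · exact hvan i j hlt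
  · have := hdiag i.toNat (by omega)
    rwa [Int.toNat_of_nonneg (by omega), ← hdiagonal, add_sub_cancel_left] at this

end Plane

/-- If `h` satisfies Dirichlet boundary conditions, is discrete harmonic for weights `p`
(nonnegative, summing to `1`, with `p 0 0 < 1`), and vanishes on both boundary axes, then
`h` is identically zero. -/
theorem harmonic_vanishing_on_axes_is_zero
    (p : ℤ → ℤ → ℝ) (hp0 : ∀ u v : ℤ, 0 ≤ p u v)
    (hp1 : ∑ u ∈ ({-1, 0, 1} : Finset ℤ), ∑ v ∈ ({-1, 0, 1} : Finset ℤ), p u v = 1)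
    (hp00 : p 0 0 < 1)
    (h : ℤ → ℤ → ℝ)
    (hD : ∀ i j : ℤ, i < 0 ∨ j < 0 → h i j = 0)
    (hharm : ∀ i j : ℤ, 0 ≤ i → 0 ≤ j → dLap p h i j = 0)
    (hax1 : ∀ i : ℤ, 0 ≤ i → h i 0 = 0)
    (hax2 : ∀ j : ℤ, 0 ≤ j → h 0 j = 0) :
    h = 0 := by
  have hvan : ∀ N : ℕ, VanishesBelow h N := by
    intro N
    induction N with
    | zero => exact fun i j hij ↦ hD i j (by omega)
    | succ N ih => exact_mod_cast ih.succ hD (diagonal_eq_zero hp0 hp1 hp00 hharm hax1 hax2 ih)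
  funext i j
  exact hvan ((i + j).toNat + 1) i j (by omega)
end

section
/- For the simple walk, the function g : ℤ² → ℝ defined by g(i,j) = (i+1)·j(j+1)(j+2) for i,j ≥ 0 and g(i,j) = 0 otherwise (the coefficient function of the generating function H₂¹ = −32y/((x−1)²(y−1)⁴) up to a nonzero scalar), satisfies Δg = (3/2)·v₁, where v₁(i,j) = (i+1)(j+1) on the quadrant (extended by zero). In particular Δ²g = 0, i.e. g is discrete biharmonic. -/
/-- The discrete Laplacian of the simple walk (steps `(±1,0)`, `(0,±1)`, weight `1/4` each),
defined to be `0` outside the quarter plane. -/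
noncomputable def swLap (h : ℤ → ℤ → ℝ) : ℤ → ℤ → ℝ :=
  fun i j =>
    if 0 ≤ i ∧ 0 ≤ j then
      (h (i + 1) j + h (i - 1) j + h i (j + 1) + h i (j - 1)) / 4 - h i j
    else 0

/-!
Both `g` and `v₁` are restrictions to the quarter plane of polynomials vanishing on the lines
`i = -1` and `j = -1`. For such a polynomial `p`, the Dirichlet Laplacian of its restriction is
the restriction of the free Laplacian of `p`, since every neighbour of a point of the quadrant
lies in `{i ≥ -1, j ≥ -1}`. The free Laplacians of `(i+1) j (j+1) (j+2)` and `(i+1)(j+1)` are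
`(3/2)(i+1)(j+1)` and `0` respectively.
-/

noncomputable def quadrantExt (p : ℤ → ℤ → ℝ) : ℤ → ℤ → ℝ :=
  fun i j => if 0 ≤ i ∧ 0 ≤ j then p i j else 0

noncomputable def planeLap (p : ℤ → ℤ → ℝ) : ℤ → ℤ → ℝ :=
  fun i j => (p (i + 1) j + p (i - 1) j + p i (j + 1) + p i (j - 1)) / 4 - p i j

@[simp]
theorem quadrantExt_zero : quadrantExt 0 = 0 := by
  funext i j
  simp [quadrantExt]

theorem quadrantExt_eq_of_vanish {p : ℤ → ℤ → ℝ} (hi : ∀ j, p (-1) j = 0)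
    (hj : ∀ i, p i (-1) = 0) {i j : ℤ} (hi₁ : -1 ≤ i) (hj₁ : -1 ≤ j) :
    quadrantExt p i j = p i j := by
  unfold quadrantExt
  split_ifs with h
  · rfl
  · rcases (not_and_or.mp h) with hi₀ | hj₀
    · rw [show i = -1 by omega, hi]
    · rw [show j = -1 by omega, hj]

theorem swLap_quadrantExt {p : ℤ → ℤ → ℝ} (hi : ∀ j, p (-1) j = 0)
    (hj : ∀ i, p i (-1) = 0) :
    swLap (quadrantExt p) = quadrantExt (planeLap p) := by
  funext i j
  unfold swLap
  split_ifs with h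
  · obtain ⟨hi₀, hj₀⟩ := h
    simp (disch := omega) only [quadrantExt_eq_of_vanish hi hj]
    simp [quadrantExt, planeLap, hi₀, hj₀]
  · simp [quadrantExt, h]

/-- For the simple walk, `g(i,j) = (i+1)·j(j+1)(j+2)` on the quarter plane (extended by `0`),
the coefficient function of the generating function `H₂¹ = −32y/((x−1)²(y−1)⁴)` up to a nonzero
scalar, satisfies `Δg = (3/2)·v₁` with `v₁(i,j) = (i+1)(j+1)`; in particular `Δ²g = 0`,
i.e. `g` is discrete biharmonic. -/
theorem simple_walk_g_biharmonic
    (v₁ g : ℤ → ℤ → ℝ)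
    (hv₁ : ∀ i j : ℤ, v₁ i j = if 0 ≤ i ∧ 0 ≤ j then ((i : ℝ) + 1) * ((j : ℝ) + 1) else 0)
    (hg : ∀ i j : ℤ, g i j =
      if 0 ≤ i ∧ 0 ≤ j then ((i : ℝ) + 1) * ((j : ℝ) * ((j : ℝ) + 1) * ((j : ℝ) + 2))
      else 0) :
    (swLap g = fun i j => (3 / 2) * v₁ i j) ∧ swLap (swLap g) = 0 := by
  set G : ℤ → ℤ → ℝ := fun i j => ((i : ℝ) + 1) * ((j : ℝ) * ((j : ℝ) + 1) * ((j : ℝ) + 2))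
  set V : ℤ → ℤ → ℝ := fun i j => 3 / 2 * (((i : ℝ) + 1) * ((j : ℝ) + 1))
  have hg_ext : g = quadrantExt G := funext fun i => funext (hg i)
  have hv_ext : (fun i j => 3 / 2 * v₁ i j) = quadrantExt V := by
    funext i j
    simp only [hv₁, quadrantExt, V]
    split_ifs <;> simp
  have hlapG : planeLap G = V := by
    funext i j
    simp only [planeLap, G, V]
    push_cast
    ring
  have hlapV : planeLap V = 0 := by
    funext i j
    simp only [planeLap, V, Pi.zero_apply]
    push_cast
    ring
  have hΔg : swLap g = fun i j => 3 / 2 * v₁ i j := by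
    rw [hg_ext, swLap_quadrantExt (by simp [G]) (by simp [G]), hlapG, hv_ext]
  refine ⟨hΔg, ?_⟩
  rw [hΔg, hv_ext, swLap_quadrantExt (by simp [V]) (by simp [V]), hlapV, quadrantExt_zero]
end
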